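/- arXiv:0909.3740 — 6 statements merged into one kernel-verified Lean document; each statement's English description precedes it below -/
import Mathlib

section
/- Let ω be a skew-symmetric bilinear form on a dendriform algebra (A,≻,≺). Then: (1) ω is invariant if and only if ω satisfies ω(x≻y,z) = ω(y, z*x) for all x,y,z ∈ A together with the cyclic identity ω(x≻y,z) + ω(y≻z,x) + ω(z≻x,y) = 0 for all x,y,z ∈ A; (2) ω is invariant if and only if ω satisfies ω(x≺y,z) = ω(x, y*z) for all x,y,z ∈ A together with the cyclic identity ω(x≺y,z) + ω(y≺z,x) + ω(z≺x,y) = 0 for all x,y,z ∈ A. -/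
/-!
Write `x * y = x ≻ y + x ≺ y` and `C(x, y, z) = ω(x, y * z) + ω(y, z * x) + ω(z, x * y)`.
Since `ω(x ≻ y, z) + ω(x ≺ y, z) = ω(x * y, z) = -ω(z, x * y)`, the defects of the two
invariance identities at `(x, y, z)` add up to `-C(x, y, z)`; so any two of "`≻`-invariance",
"`≺`-invariance" and "`C = 0`" imply the third. Moreover, under `≻`-invariance (resp.
`≺`-invariance) the cyclic sum of `ω(x ≻ y, z)` (resp. `ω(x ≺ y, z)`) is exactly `C(x, y, z)`.
-/

section SkewForm

variable {R M N : Type*} [CommSemiring R] [AddCommGroup M] [Module R M] [AddCommGroup N]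
  [Module R N] (succ prec : M →ₗ[R] M →ₗ[R] M) (ω : M →ₗ[R] M →ₗ[R] N)

def mulCyclicSum (x y z : M) : N :=
  ω x (succ y z + prec y z) + ω y (succ z x + prec z x) + ω z (succ x y + prec x y)

variable {succ prec ω}

theorem succ_defect_add_prec_defect (hskew : ∀ x y : M, ω x y = -ω y x) (x y z : M) :
    (ω (succ x y) z - ω y (succ z x + prec z x)) + (ω (prec x y) z - ω x (succ y z + prec y z)) =
      -mulCyclicSum succ prec ω x y z := by
  have hmul : ω (succ x y) z + ω (prec x y) z = -ω z (succ x y + prec x y) := by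
    rw [← LinearMap.add_apply, ← map_add, hskew]
  rw [mulCyclicSum, ← sub_eq_zero, ← sub_eq_zero.mpr hmul]
  abel

theorem mulCyclicSum_eq_zero_of_invariant (hskew : ∀ x y : M, ω x y = -ω y x) {x y z : M}
    (hs : ω (succ x y) z = ω y (succ z x + prec z x))
    (hp : ω (prec x y) z = ω x (succ y z + prec y z)) :
    mulCyclicSum succ prec ω x y z = 0 := by
  have h := succ_defect_add_prec_defect (succ := succ) (prec := prec) hskew x y z
  rwa [hs, hp, sub_self, sub_self, add_zero, eq_comm, neg_eq_zero] at h

theorem prec_invariant_of_succ_invariant (hskew : ∀ x y : M, ω x y = -ω y x) {x y z : M}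
    (hs : ω (succ x y) z = ω y (succ z x + prec z x))
    (hC : mulCyclicSum succ prec ω x y z = 0) :
    ω (prec x y) z = ω x (succ y z + prec y z) := by
  have h := succ_defect_add_prec_defect (succ := succ) (prec := prec) hskew x y z
  rwa [hs, hC, sub_self, zero_add, neg_zero, sub_eq_zero] at h

theorem succ_invariant_of_prec_invariant (hskew : ∀ x y : M, ω x y = -ω y x) {x y z : M}
    (hp : ω (prec x y) z = ω x (succ y z + prec y z))
    (hC : mulCyclicSum succ prec ω x y z = 0) :
    ω (succ x y) z = ω y (succ z x + prec z x) := by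
  have h := succ_defect_add_prec_defect (succ := succ) (prec := prec) hskew x y z
  rwa [hp, hC, sub_self, add_zero, neg_zero, sub_eq_zero] at h

theorem succ_cyclicSum_eq_mulCyclicSum
    (hs : ∀ x y z : M, ω (succ x y) z = ω y (succ z x + prec z x)) (x y z : M) :
    ω (succ x y) z + ω (succ y z) x + ω (succ z x) y = mulCyclicSum succ prec ω x y z := by
  rw [hs, hs, hs, mulCyclicSum]
  abel

theorem prec_cyclicSum_eq_mulCyclicSum
    (hp : ∀ x y z : M, ω (prec x y) z = ω x (succ y z + prec y z)) (x y z : M) :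
    ω (prec x y) z + ω (prec y z) x + ω (prec z x) y = mulCyclicSum succ prec ω x y z := by
  rw [hp, hp, hp, mulCyclicSum]

end SkewForm

theorem dendriform_skew_invariant_iff_cyclic_general
    {K A : Type*} [Field K] [AddCommGroup A] [Module K A]
    (succ prec : A →ₗ[K] A →ₗ[K] A)
    (ω : A →ₗ[K] A →ₗ[K] K)
    (hskew : ∀ x y : A, ω x y = - ω y x) :
    (((∀ x y z : A, ω (succ x y) z = ω y (succ z x + prec z x)) ∧
      (∀ x y z : A, ω (prec x y) z = ω x (succ y z + prec y z))) ↔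
     ((∀ x y z : A, ω (succ x y) z = ω y (succ z x + prec z x)) ∧
      (∀ x y z : A, ω (succ x y) z + ω (succ y z) x + ω (succ z x) y = 0))) ∧
    (((∀ x y z : A, ω (succ x y) z = ω y (succ z x + prec z x)) ∧
      (∀ x y z : A, ω (prec x y) z = ω x (succ y z + prec y z))) ↔
     ((∀ x y z : A, ω (prec x y) z = ω x (succ y z + prec y z)) ∧
      (∀ x y z : A, ω (prec x y) z + ω (prec y z) x + ω (prec z x) y = 0))) := by
  refine ⟨⟨fun ⟨hs, hp⟩ => ⟨hs, fun x y z => ?_⟩, fun ⟨hs, hc⟩ => ⟨hs, fun x y z => ?_⟩⟩,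
    ⟨fun ⟨hs, hp⟩ => ⟨hp, fun x y z => ?_⟩, fun ⟨hp, hc⟩ => ⟨fun x y z => ?_, hp⟩⟩⟩
  · rw [succ_cyclicSum_eq_mulCyclicSum hs]
    exact mulCyclicSum_eq_zero_of_invariant hskew (hs x y z) (hp x y z)
  · refine prec_invariant_of_succ_invariant hskew (hs x y z) ?_
    rw [← succ_cyclicSum_eq_mulCyclicSum hs, hc]
  · rw [prec_cyclicSum_eq_mulCyclicSum hp]
    exact mulCyclicSum_eq_zero_of_invariant hskew (hs x y z) (hp x y z)
  · refine succ_invariant_of_prec_invariant hskew (hp x y z) ?_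
    rw [← prec_cyclicSum_eq_mulCyclicSum hp, hc]

/-- Proposition 3.2.2 (3)–(4): for a skew-symmetric bilinear form `ω` on a dendriform
algebra `(A, ≻, ≺)` (products `succ`, `prec`, with `x * y = x ≻ y + x ≺ y`),
invariance is equivalent to equation (3.2.1) together with the cyclic identity (3.2.4),
and also to equation (3.2.2) together with the cyclic identity (3.2.5). -/
theorem dendriform_skew_invariant_iff_cyclic
    {K A : Type*} [Field K] [CharZero K] [AddCommGroup A] [Module K A]
    (succ prec : A →ₗ[K] A →ₗ[K] A)
    (hd1 : ∀ x y z : A, prec (prec x y) z = prec x (succ y z + prec y z))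
    (hd2 : ∀ x y z : A, prec (succ x y) z = succ x (prec y z))
    (hd3 : ∀ x y z : A, succ x (succ y z) = succ (succ x y + prec x y) z)
    (ω : A →ₗ[K] A →ₗ[K] K)
    (hskew : ∀ x y : A, ω x y = - ω y x) :
    (((∀ x y z : A, ω (succ x y) z = ω y (succ z x + prec z x)) ∧
      (∀ x y z : A, ω (prec x y) z = ω x (succ y z + prec y z))) ↔
     ((∀ x y z : A, ω (succ x y) z = ω y (succ z x + prec z x)) ∧
      (∀ x y z : A, ω (succ x y) z + ω (succ y z) x + ω (succ z x) y = 0))) ∧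
    (((∀ x y z : A, ω (succ x y) z = ω y (succ z x + prec z x)) ∧
      (∀ x y z : A, ω (prec x y) z = ω x (succ y z + prec y z))) ↔
     ((∀ x y z : A, ω (prec x y) z = ω x (succ y z + prec y z)) ∧
      (∀ x y z : A, ω (prec x y) z + ω (prec y z) x + ω (prec z x) y = 0))) :=
  dendriform_skew_invariant_iff_cyclic_general succ prec ω hskew
end

section
/- Let ω be an invariant skew-symmetric bilinear form on a dendriform algebra (A,≻,≺). Then ω is a Connes cocycle of the associated associative algebra (A,*), i.e. ω(x*y,z) + ω(y*z,x) + ω(z*x,y) = 0 for all x,y,z ∈ A. -/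
/-!
Invariance splits `ω (x * y) z` as `ω y (z * x) + ω x (y * z)`; by skew-symmetry the right-hand
side is `-(ω (z * x) y + ω (y * z) x)`, which is already the cocycle identity.
-/

theorem dendriform_invariant_form_apply_mul {R M : Type*} [CommSemiring R] [AddCommMonoid M]
    [Module R M]
    (succ prec : M →ₗ[R] M →ₗ[R] M) (ω : M →ₗ[R] M →ₗ[R] R)
    (hinv1 : ∀ x y z : M, ω (succ x y) z = ω y (succ z x + prec z x))
    (hinv2 : ∀ x y z : M, ω (prec x y) z = ω x (succ y z + prec y z)) (x y z : M) :
    ω (succ x y + prec x y) z = ω y (succ z x + prec z x) + ω x (succ y z + prec y z) := by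
  rw [map_add, LinearMap.add_apply, hinv1, hinv2]

theorem cyclic_sum_eq_zero_of_skew {M G : Type*} [AddCommGroup G] (mul : M → M → M)
    (ω : M → M → G) (hskew : ∀ x y : M, ω x y = -ω y x)
    (hsplit : ∀ x y z : M, ω (mul x y) z = ω y (mul z x) + ω x (mul y z)) (x y z : M) :
    ω (mul x y) z + ω (mul y z) x + ω (mul z x) y = 0 := by
  rw [hsplit, hskew y, hskew x]
  abel

theorem dendriform_invariant_skew_form_is_connes_cocycle_general
    {K A : Type*} [Field K] [AddCommGroup A] [Module K A]
    (succ prec : A →ₗ[K] A →ₗ[K] A)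
    (ω : A →ₗ[K] A →ₗ[K] K)
    (hskew : ∀ x y : A, ω x y = - ω y x)
    (hinv1 : ∀ x y z : A, ω (succ x y) z = ω y (succ z x + prec z x))
    (hinv2 : ∀ x y z : A, ω (prec x y) z = ω x (succ y z + prec y z)) :
    ∀ x y z : A,
      ω (succ x y + prec x y) z + ω (succ y z + prec y z) x
        + ω (succ z x + prec z x) y = 0 :=
  cyclic_sum_eq_zero_of_skew (fun x y => succ x y + prec x y) (fun x y => ω x y) hskew
    (dendriform_invariant_form_apply_mul succ prec ω hinv1 hinv2)

/-- Proposition 3.2.2 (5): an invariant skew-symmetric bilinear form `ω` on a dendriform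
algebra `(A, ≻, ≺)` is a Connes cocycle of the associated associative algebra
`(A, *)`, where `x * y = x ≻ y + x ≺ y`. -/
theorem dendriform_invariant_skew_form_is_connes_cocycle
    {K A : Type*} [Field K] [CharZero K] [AddCommGroup A] [Module K A]
    (succ prec : A →ₗ[K] A →ₗ[K] A)
    (hd1 : ∀ x y z : A, prec (prec x y) z = prec x (succ y z + prec y z))
    (hd2 : ∀ x y z : A, prec (succ x y) z = succ x (prec y z))
    (hd3 : ∀ x y z : A, succ x (succ y z) = succ (succ x y + prec x y) z)
    (ω : A →ₗ[K] A →ₗ[K] K)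
    (hskew : ∀ x y : A, ω x y = - ω y x)
    (hinv1 : ∀ x y z : A, ω (succ x y) z = ω y (succ z x + prec z x))
    (hinv2 : ∀ x y z : A, ω (prec x y) z = ω x (succ y z + prec y z)) :
    ∀ x y z : A,
      ω (succ x y + prec x y) z + ω (succ y z + prec y z) x
        + ω (succ z x + prec z x) y = 0 :=
  dendriform_invariant_skew_form_is_connes_cocycle_general succ prec ω hskew hinv1 hinv2
end

section
/- Let (A,*) be a finite-dimensional associative algebra over a field of characteristic zero and let ω be a nondegenerate skew-symmetric bilinear form on A. Define bilinear products ≻, ≺ on A by the conditions ω(x≻y,z) = ω(y, z*x) and ω(x≺y,z) = ω(x, y*z) for all x,y,z ∈ A (these determine ≻ and ≺ uniquely by nondegeneracy). Then ω is a Connes cocycle of (A,*) if and only if (A,≻,≺) is a dendriform algebra satisfying x≻y + x≺y = x*y for all x,y ∈ A on which ω is invariant. -/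
/-!
Skewness turns the cocycle identity into `ω (x * y) z = ω y (z * x) + ω x (y * z)`, and the
right-hand side is `ω (x ≻ y + x ≺ y) z` by the defining relations of `≻` and `≺`; so, by
nondegeneracy, `ω` is a Connes cocycle exactly when `≻ + ≺ = *`. Once this holds, each dendriform
axiom, paired with `ω`, unfolds to an instance of associativity of `*`, and invariance of `ω` is the
defining relations with `*` written as `≻ + ≺`.
-/

/-- Dendriform algebra axioms for a pair of bilinear products `succ` (≻) and `prec` (≺). -/
def IsDendriform {K A : Type*} [Field K] [AddCommGroup A] [Module K A]
    (succ prec : A →ₗ[K] A →ₗ[K] A) : Prop :=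
  (∀ x y z : A, prec (prec x y) z = prec x (succ y z + prec y z)) ∧
  (∀ x y z : A, prec (succ x y) z = succ x (prec y z)) ∧
  (∀ x y z : A, succ x (succ y z) = succ (succ x y + prec x y) z)

theorem LinearMap.SeparatingLeft.eq_of_forall_apply_eq {R M N : Type*} [CommRing R]
    [AddCommGroup M] [Module R M] [AddCommGroup N] [Module R N] {B : M →ₗ[R] N →ₗ[R] R}
    (hB : B.SeparatingLeft) {a b : M} (h : ∀ y, B a y = B b y) : a = b :=
  LinearMap.ker_eq_bot.mp (separatingLeft_iff_ker_eq_bot.mp hB) (LinearMap.ext h)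

section DualProducts

variable {K A : Type*} [CommRing K] [AddCommGroup A] [Module K A]
  {mul : A →ₗ[K] A →ₗ[K] A} {ω : A →ₗ[K] A →ₗ[K] K} {succ prec : A →ₗ[K] A →ₗ[K] A}

theorem form_succ_add_prec (hsucc : ∀ x y z : A, ω (succ x y) z = ω y (mul z x))
    (hprec : ∀ x y z : A, ω (prec x y) z = ω x (mul y z)) (x y z : A) :
    ω (succ x y + prec x y) z = ω y (mul z x) + ω x (mul y z) := by
  rw [map_add, LinearMap.add_apply, hsucc, hprec]

theorem connes_cocycle_iff_succ_add_prec_eq_mul (hskew : ∀ x y : A, ω x y = - ω y x)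
    (hnd : ω.SeparatingLeft) (hsucc : ∀ x y z : A, ω (succ x y) z = ω y (mul z x))
    (hprec : ∀ x y z : A, ω (prec x y) z = ω x (mul y z)) :
    (∀ x y z : A, ω (mul x y) z + ω (mul y z) x + ω (mul z x) y = 0) ↔
      ∀ x y : A, succ x y + prec x y = mul x y := by
  constructor
  · intro hcocycle x y
    refine hnd.eq_of_forall_apply_eq fun z => ?_
    have h := hcocycle x y z
    rw [hskew (mul y z) x, hskew (mul z x) y] at h
    rw [form_succ_add_prec hsucc hprec]
    linear_combination -h
  · intro hsum x y z
    rw [← hsum x y, form_succ_add_prec hsucc hprec, hskew (mul y z) x, hskew (mul z x) y]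
    ring

end DualProducts

theorem isDendriform_of_succ_add_prec_eq_mul
    {K A : Type*} [Field K] [AddCommGroup A] [Module K A]
    {mul : A →ₗ[K] A →ₗ[K] A} {ω : A →ₗ[K] A →ₗ[K] K} {succ prec : A →ₗ[K] A →ₗ[K] A}
    (hassoc : ∀ x y z : A, mul (mul x y) z = mul x (mul y z))
    (hnd : ω.SeparatingLeft) (hsucc : ∀ x y z : A, ω (succ x y) z = ω y (mul z x))
    (hprec : ∀ x y z : A, ω (prec x y) z = ω x (mul y z))
    (hsum : ∀ x y : A, succ x y + prec x y = mul x y) :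
    IsDendriform succ prec := by
  refine ⟨fun x y z => ?_, fun x y z => ?_, fun x y z => ?_⟩
  · rw [hsum y z]
    exact hnd.eq_of_forall_apply_eq fun w => by simp only [hprec, hassoc]
  · exact hnd.eq_of_forall_apply_eq fun w => by simp only [hprec, hsucc, hassoc]
  · rw [hsum x y]
    exact hnd.eq_of_forall_apply_eq fun w => by simp only [hsucc, hassoc]

theorem connes_cocycle_iff_compatible_dendriform_invariant_general
    {K A : Type*} [Field K] [AddCommGroup A] [Module K A]
    (mul : A →ₗ[K] A →ₗ[K] A)
    (hassoc : ∀ x y z : A, mul (mul x y) z = mul x (mul y z))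
    (ω : A →ₗ[K] A →ₗ[K] K)
    (hskew : ∀ x y : A, ω x y = - ω y x)
    (hnd : ∀ x : A, (∀ y : A, ω x y = 0) → x = 0)
    (succ prec : A →ₗ[K] A →ₗ[K] A)
    (hsucc : ∀ x y z : A, ω (succ x y) z = ω y (mul z x))
    (hprec : ∀ x y z : A, ω (prec x y) z = ω x (mul y z)) :
    (∀ x y z : A, ω (mul x y) z + ω (mul y z) x + ω (mul z x) y = 0) ↔
    (IsDendriform succ prec ∧ (∀ x y : A, succ x y + prec x y = mul x y) ∧
     (∀ x y z : A, ω (succ x y) z = ω y (succ z x + prec z x)) ∧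
     (∀ x y z : A, ω (prec x y) z = ω x (succ y z + prec y z))) := by
  rw [connes_cocycle_iff_succ_add_prec_eq_mul hskew hnd hsucc hprec]
  refine ⟨fun hsum => ⟨isDendriform_of_succ_add_prec_eq_mul hassoc hnd hsucc hprec hsum, hsum,
    fun x y z => ?_, fun x y z => ?_⟩, fun h => h.2.1⟩
  · rw [hsum]
    exact hsucc x y z
  · rw [hsum]
    exact hprec x y z

/-- Corollary 3.2.3: let `(A, *)` (product `mul`) be a finite-dimensional associative
algebra with a nondegenerate skew-symmetric bilinear form `ω`, and let `≻ = succ`,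
`≺ = prec` be the bilinear products determined by `ω(x ≻ y, z) = ω(y, z * x)` and
`ω(x ≺ y, z) = ω(x, y * z)`.  Then `ω` is a Connes cocycle of `(A, *)` if and only if
`(A, ≻, ≺)` is a dendriform algebra with `x ≻ y + x ≺ y = x * y` on which `ω` is
invariant. -/
theorem connes_cocycle_iff_compatible_dendriform_invariant
    {K A : Type*} [Field K] [CharZero K] [AddCommGroup A] [Module K A]
    [FiniteDimensional K A]
    (mul : A →ₗ[K] A →ₗ[K] A)
    (hassoc : ∀ x y z : A, mul (mul x y) z = mul x (mul y z))
    (ω : A →ₗ[K] A →ₗ[K] K)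
    (hskew : ∀ x y : A, ω x y = - ω y x)
    (hnd : ∀ x : A, (∀ y : A, ω x y = 0) → x = 0)
    (succ prec : A →ₗ[K] A →ₗ[K] A)
    (hsucc : ∀ x y z : A, ω (succ x y) z = ω y (mul z x))
    (hprec : ∀ x y z : A, ω (prec x y) z = ω x (mul y z)) :
    (∀ x y z : A, ω (mul x y) z + ω (mul y z) x + ω (mul z x) y = 0) ↔
    (IsDendriform succ prec ∧ (∀ x y : A, succ x y + prec x y = mul x y) ∧
     (∀ x y z : A, ω (succ x y) z = ω y (succ z x + prec z x)) ∧
     (∀ x y z : A, ω (prec x y) z = ω x (succ y z + prec y z))) :=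
  connes_cocycle_iff_compatible_dendriform_invariant_general mul hassoc ω hskew hnd succ prec hsucc
    hprec
end

section
/- Let (A,≻,≺) be a finite-dimensional dendriform algebra with associated associative algebra (A,*), and let r ∈ A⊗A be symmetric. Then the following are equivalent: (1) r is a solution of the D-equation r₁₂*r₁₃ = r₁₃≺r₂₃ + r₂₃≻r₁₂; (2) the induced map r : A* → A satisfies r(a*)*r(b*) = r(R_≺*(r(a*))b* + L_≻*(r(b*))a*) for all a*,b* ∈ A*; (3) r(a*)≻r(b*) = r(R_**(r(a*))b* − L_≺*(r(b*))a*) for all a*,b* ∈ A*; (4) r(a*)≺r(b*) = r(−R_≻*(r(a*))b* + L_**(r(b*))a*) for all a*,b* ∈ A*. -/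
open TensorProduct LinearMap Module

/-- `r₁₂ ∘ r₁₃` for `r ∈ A ⊗ A`: `Σ (aᵢ ∘ aⱼ) ⊗ bᵢ ⊗ bⱼ`. -/
noncomputable def tprod12_13 {K A : Type*} [Field K] [AddCommGroup A] [Module K A]
    (m : A →ₗ[K] A →ₗ[K] A) (r : A ⊗[K] A) : A ⊗[K] (A ⊗[K] A) :=
  (TensorProduct.map (TensorProduct.lift m) LinearMap.id)
    ((TensorProduct.tensorTensorTensorComm K A A A A) (r ⊗ₜ[K] r))

/-- `r₁₃ ∘ r₂₃` for `r ∈ A ⊗ A`: `Σ aᵢ ⊗ aⱼ ⊗ (bᵢ ∘ bⱼ)`. -/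
noncomputable def tprod13_23 {K A : Type*} [Field K] [AddCommGroup A] [Module K A]
    (m : A →ₗ[K] A →ₗ[K] A) (r : A ⊗[K] A) : A ⊗[K] (A ⊗[K] A) :=
  (TensorProduct.assoc K A A A)
    ((TensorProduct.map LinearMap.id (TensorProduct.lift m))
      ((TensorProduct.tensorTensorTensorComm K A A A A) (r ⊗ₜ[K] r)))

/-- `r₂₃ ∘ r₁₂` for `r ∈ A ⊗ A`: `Σ aᵢ ⊗ (aⱼ ∘ bᵢ) ⊗ bⱼ`. -/
noncomputable def tprod23_12 {K A : Type*} [Field K] [AddCommGroup A] [Module K A]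
    (m : A →ₗ[K] A →ₗ[K] A) (r : A ⊗[K] A) : A ⊗[K] (A ⊗[K] A) :=
  (TensorProduct.map LinearMap.id (TensorProduct.comm K A A).toLinearMap)
    ((TensorProduct.assoc K A A A)
      ((TensorProduct.map LinearMap.id (TensorProduct.lift m))
        ((TensorProduct.tensorTensorTensorComm K A A A A)
          ((TensorProduct.map (TensorProduct.comm K A A).toLinearMap LinearMap.id)
            ((TensorProduct.tensorTensorTensorComm K A A A A) (r ⊗ₜ[K] r))))))

/-- The linear map `A* → A` induced by `r ∈ A ⊗ A`, `v* ↦ Σ ⟨v*, bᵢ⟩ aᵢ`. -/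
noncomputable def rmap (K A : Type*) [Field K] [AddCommGroup A] [Module K A] :
    A ⊗[K] A →ₗ[K] Module.Dual K A →ₗ[K] A :=
  (dualTensorHom K (Module.Dual K A) A) ∘ₗ
    (TensorProduct.map (Module.Dual.eval K A) LinearMap.id) ∘ₗ
    (TensorProduct.comm K A A).toLinearMap

/-- Dualization `ρ ↦ ρ*` of an action `ρ : A →ₗ End V`, via transpose:
`⟨ρ*(x) a*, y⟩ = ⟨a*, ρ(x) y⟩`. -/
noncomputable def dualize {K A V : Type*} [Field K] [AddCommGroup A] [Module K A]
    [AddCommGroup V] [Module K V] (ρ : A →ₗ[K] V →ₗ[K] V) :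
    A →ₗ[K] Module.Dual K V →ₗ[K] Module.Dual K V :=
  (Module.Dual.transpose (R := K)) ∘ₗ ρ

/-!
Pure functionals `f ⊗ g ⊗ h` separate the points of `A ⊗ A ⊗ A`, so the `D`-equation is
equivalent to the scalar identity
`⟨f, r g * r h⟩ = ⟨h, r f ≺ r g⟩ + ⟨g, r h ≻ r f⟩` for all `f, g, h ∈ A*`.
Since `r` is symmetric, `⟨φ, r ψ⟩ = ⟨ψ, r φ⟩`, so pairing each of (2), (3), (4) with a test
functional `φ` turns it into this identity, with `φ` in the slot of `f`, `g` or `h` respectively.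
-/

namespace Module.Basis

variable {R M N ι κ : Type*} [CommSemiring R] [AddCommMonoid M] [Module R M]
  [AddCommMonoid N] [Module R N]

theorem tensorProduct_coord (b : Basis ι R M) (c : Basis κ R N) (i : ι) (j : κ) :
    (b.tensorProduct c).coord (i, j) = dualDistrib R M N (b.coord i ⊗ₜ c.coord j) := by
  ext x y
  simp [mul_comm]

end Module.Basis

section TripleDual

variable {R M N P : Type*} [CommSemiring R] [AddCommMonoid M] [Module R M]
  [AddCommMonoid N] [Module R N] [AddCommMonoid P] [Module R P]

noncomputable def dualTmul₃ (f : Dual R M) (g : Dual R N) (h : Dual R P) :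
    Dual R (M ⊗[R] (N ⊗[R] P)) :=
  dualDistrib R M (N ⊗[R] P) (f ⊗ₜ dualDistrib R N P (g ⊗ₜ h))

@[simp]
theorem dualTmul₃_tmul (f : Dual R M) (g : Dual R N) (h : Dual R P) (x : M) (y : N) (z : P) :
    dualTmul₃ f g h (x ⊗ₜ (y ⊗ₜ z)) = f x * (g y * h z) :=
  rfl

theorem eq_iff_forall_dualTmul₃_apply_eq [Module.Free R M] [Module.Free R N] [Module.Free R P]
    {t t' : M ⊗[R] (N ⊗[R] P)} : t = t' ↔ ∀ f g h, dualTmul₃ f g h t = dualTmul₃ f g h t' := by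
  refine ⟨fun H _ _ _ => H ▸ rfl, fun H => ?_⟩
  let b := Module.Free.chooseBasis R M
  let c := Module.Free.chooseBasis R N
  let d := Module.Free.chooseBasis R P
  refine (b.tensorProduct (c.tensorProduct d)).repr.injective (Finsupp.ext ?_)
  rintro ⟨i, j, k⟩
  simpa only [dualTmul₃, ← Basis.coord_apply, Basis.tensorProduct_coord] using
    H (b.coord i) (c.coord j) (d.coord k)

end TripleDual

section RMap

variable {K A : Type*} [Field K] [AddCommGroup A] [Module K A]

@[simp]
theorem rmap_tmul (x y : A) (φ : Dual K A) : rmap K A (x ⊗ₜ y) φ = φ y • x := by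
  simp [rmap]

@[simp]
theorem dualize_apply {V : Type*} [AddCommGroup V] [Module K V] (ρ : A →ₗ[K] V →ₗ[K] V) (x : A)
    (φ : Dual K V) (v : V) : dualize ρ x φ v = φ (ρ x v) :=
  rfl

theorem apply_rmap_comm (r : A ⊗[K] A) (φ ψ : Dual K A) :
    φ (rmap K A (TensorProduct.comm K A A r) ψ) = ψ (rmap K A r φ) := by
  induction r using TensorProduct.induction_on with
  | zero => simp
  | tmul x y => simp [mul_comm]
  | add r s hr hs => simp only [map_add, LinearMap.add_apply, hr, hs]

theorem eq_rmap_iff_of_comm_eq {r : A ⊗[K] A} (hr : TensorProduct.comm K A A r = r) (x : A)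
    (ψ : Dual K A) : x = rmap K A r ψ ↔ ∀ φ : Dual K A, φ x = ψ (rmap K A r φ) := by
  rw [← sub_eq_zero, ← Module.forall_dual_apply_eq_zero_iff K]
  conv_lhs => rw [← hr]
  simp only [map_sub, apply_rmap_comm, sub_eq_zero]

end RMap

section Pairing

variable {K A : Type*} [Field K] [AddCommGroup A] [Module K A]
  (m : A →ₗ[K] A →ₗ[K] A) (f g h : Dual K A) (r : A ⊗[K] A)

theorem dualTmul₃_tprod12_13 :
    dualTmul₃ f g h (tprod12_13 m r) = f (m (rmap K A r g) (rmap K A r h)) := by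
  -- `r ⊗ r` is not linear in `r`: decouple the two factors before inducting.
  suffices ∀ s t : A ⊗[K] A, dualTmul₃ f g h (map (lift m) LinearMap.id
      (tensorTensorTensorComm K A A A A (s ⊗ₜ t))) = f (m (rmap K A s g) (rmap K A t h)) from
    this r r
  intro s t
  induction s using TensorProduct.induction_on with
  | zero => simp
  | add s₁ s₂ h₁ h₂ => simp only [add_tmul, map_add, LinearMap.add_apply, h₁, h₂]
  | tmul x y =>
    induction t using TensorProduct.induction_on with
    | zero => simp
    | add t₁ t₂ h₁ h₂ => simp only [tmul_add, map_add, LinearMap.add_apply, h₁, h₂]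
    | tmul z w =>
      simp only [tensorTensorTensorComm_tmul, map_tmul, lift.tmul, LinearMap.id_coe, id_eq,
        dualTmul₃_tmul, rmap_tmul, map_smul, LinearMap.smul_apply, smul_eq_mul]
      ring

theorem dualTmul₃_tprod13_23 :
    dualTmul₃ f g h (tprod13_23 m r) =
      h (m (rmap K A (TensorProduct.comm K A A r) f)
        (rmap K A (TensorProduct.comm K A A r) g)) := by
  suffices ∀ s t : A ⊗[K] A, dualTmul₃ f g h (TensorProduct.assoc K A A A
      (map LinearMap.id (lift m) (tensorTensorTensorComm K A A A A (s ⊗ₜ t)))) =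
      h (m (rmap K A (TensorProduct.comm K A A s) f) (rmap K A (TensorProduct.comm K A A t) g)) from
    this r r
  intro s t
  induction s using TensorProduct.induction_on with
  | zero => simp
  | add s₁ s₂ h₁ h₂ => simp only [add_tmul, map_add, LinearMap.add_apply, h₁, h₂]
  | tmul x y =>
    induction t using TensorProduct.induction_on with
    | zero => simp
    | add t₁ t₂ h₁ h₂ => simp only [tmul_add, map_add, LinearMap.add_apply, h₁, h₂]
    | tmul z w =>
      simp only [tensorTensorTensorComm_tmul, map_tmul, lift.tmul, LinearMap.id_coe, id_eq,
        comm_tmul, assoc_tmul, dualTmul₃_tmul, rmap_tmul, map_smul, LinearMap.smul_apply,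
        smul_eq_mul]
      ring

theorem dualTmul₃_tprod23_12 :
    dualTmul₃ f g h (tprod23_12 m r) =
      g (m (rmap K A r h) (rmap K A (TensorProduct.comm K A A r) f)) := by
  suffices ∀ s t : A ⊗[K] A, dualTmul₃ f g h
      (map LinearMap.id (TensorProduct.comm K A A).toLinearMap (TensorProduct.assoc K A A A
        (map LinearMap.id (lift m) (tensorTensorTensorComm K A A A A
          (map (TensorProduct.comm K A A).toLinearMap LinearMap.id
            (tensorTensorTensorComm K A A A A (s ⊗ₜ t))))))) =
      g (m (rmap K A s h) (rmap K A (TensorProduct.comm K A A t) f)) from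
    this r r
  intro s t
  induction s using TensorProduct.induction_on with
  | zero => simp
  | add s₁ s₂ h₁ h₂ => simp only [add_tmul, map_add, LinearMap.add_apply, h₁, h₂]
  | tmul x y =>
    induction t using TensorProduct.induction_on with
    | zero => simp
    | add t₁ t₂ h₁ h₂ => simp only [tmul_add, map_add, LinearMap.add_apply, h₁, h₂]
    | tmul z w =>
      simp only [tensorTensorTensorComm_tmul, map_tmul, lift.tmul, LinearMap.id_coe, id_eq,
        LinearEquiv.coe_coe, comm_tmul, assoc_tmul, dualTmul₃_tmul, rmap_tmul, map_smul,
        LinearMap.smul_apply, smul_eq_mul]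
      ring

end Pairing

theorem D_equation_iff_forall_dual {K A : Type*} [Field K] [AddCommGroup A] [Module K A]
    (succ prec : A →ₗ[K] A →ₗ[K] A) {r : A ⊗[K] A} (hr : TensorProduct.comm K A A r = r) :
    tprod12_13 (succ + prec) r = tprod13_23 prec r + tprod23_12 succ r ↔
      ∀ f g h : Dual K A, f ((succ + prec) (rmap K A r g) (rmap K A r h)) =
        h (prec (rmap K A r f) (rmap K A r g)) + g (succ (rmap K A r h) (rmap K A r f)) := by
  simp only [eq_iff_forall_dualTmul₃_apply_eq, map_add, dualTmul₃_tprod12_13,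
    dualTmul₃_tprod13_23, dualTmul₃_tprod23_12, hr]

theorem D_equation_tfae_general
    {K A : Type*} [Field K] [AddCommGroup A] [Module K A]
    (succ prec : A →ₗ[K] A →ₗ[K] A)
    (r : A ⊗[K] A)
    (hsymm : (TensorProduct.comm K A A) r = r) :
    ((tprod12_13 (succ + prec) r = tprod13_23 prec r + tprod23_12 succ r) ↔
     (∀ a b : Module.Dual K A,
        (succ + prec) (rmap K A r a) (rmap K A r b) =
          rmap K A r (dualize prec.flip (rmap K A r a) b
            + dualize succ (rmap K A r b) a))) ∧
    ((tprod12_13 (succ + prec) r = tprod13_23 prec r + tprod23_12 succ r) ↔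
     (∀ a b : Module.Dual K A,
        succ (rmap K A r a) (rmap K A r b) =
          rmap K A r (dualize (succ + prec).flip (rmap K A r a) b
            - dualize prec (rmap K A r b) a))) ∧
    ((tprod12_13 (succ + prec) r = tprod13_23 prec r + tprod23_12 succ r) ↔
     (∀ a b : Module.Dual K A,
        prec (rmap K A r a) (rmap K A r b) =
          rmap K A r (- dualize succ.flip (rmap K A r a) b
            + dualize (succ + prec) (rmap K A r b) a))) := by
  simp only [D_equation_iff_forall_dual succ prec hsymm, eq_rmap_iff_of_comm_eq hsymm]
  simp only [map_add, LinearMap.add_apply, LinearMap.sub_apply, LinearMap.neg_apply, dualize_apply,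
    flip_apply]
  refine ⟨⟨fun H a b φ => ?_, fun H f g h => ?_⟩, ⟨fun H a b φ => ?_, fun H f g h => ?_⟩,
    ⟨fun H a b φ => ?_, fun H f g h => ?_⟩⟩
  · linear_combination H φ a b
  · linear_combination H g h f
  · linear_combination -H b φ a
  · linear_combination -H h f g
  · linear_combination -H a b φ
  · linear_combination -H f g h

/-- Theorem 3.3.3: for a symmetric `r ∈ A ⊗ A` over a finite-dimensional dendriform
algebra `(A, ≻, ≺)` with associated associative algebra `(A, *)` (`* = ≻ + ≺`), the
following are equivalent: (1) `r` solves the `D`-equation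
`r₁₂ * r₁₃ = r₁₃ ≺ r₂₃ + r₂₃ ≻ r₁₂`; (2) `r` is an `O`-operator of `(A, *)` associated
to `(R_≺*, L_≻*)`; (3) equation (3.3.2); (4) equation (3.3.3). -/
theorem D_equation_tfae
    {K A : Type*} [Field K] [CharZero K] [AddCommGroup A] [Module K A]
    [FiniteDimensional K A]
    (succ prec : A →ₗ[K] A →ₗ[K] A)
    (hdend : IsDendriform succ prec)
    (r : A ⊗[K] A)
    (hsymm : (TensorProduct.comm K A A) r = r) :
    ((tprod12_13 (succ + prec) r = tprod13_23 prec r + tprod23_12 succ r) ↔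
     (∀ a b : Module.Dual K A,
        (succ + prec) (rmap K A r a) (rmap K A r b) =
          rmap K A r (dualize prec.flip (rmap K A r a) b
            + dualize succ (rmap K A r b) a))) ∧
    ((tprod12_13 (succ + prec) r = tprod13_23 prec r + tprod23_12 succ r) ↔
     (∀ a b : Module.Dual K A,
        succ (rmap K A r a) (rmap K A r b) =
          rmap K A r (dualize (succ + prec).flip (rmap K A r a) b
            - dualize prec (rmap K A r b) a))) ∧
    ((tprod12_13 (succ + prec) r = tprod13_23 prec r + tprod23_12 succ r) ↔
     (∀ a b : Module.Dual K A,
        prec (rmap K A r a) (rmap K A r b) =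
          rmap K A r (- dualize succ.flip (rmap K A r a) b
            + dualize (succ + prec) (rmap K A r b) a))) :=
  D_equation_tfae_general succ prec r hsymm
end

section
/- Let (A,≻,≺) be a dendriform algebra and R : A → A a Rota-Baxter operator on (A,≻,≺), i.e. R(x)≻R(y) = R(R(x)≻y + x≻R(y)) and R(x)≺R(y) = R(R(x)≺y + x≺R(y)) for all x,y ∈ A. Then the four products x↘y = R(x)≻y, x↗y = x≻R(y), x↙y = R(x)≺y, x↖y = x≺R(y) make A a quadri-algebra. -/
/-!
Put `x ≻' y = R x ≻ y + x ≻ R y` and `x ≺' y = R x ≺ y + x ≺ R y`. The Rota–Baxter identities say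
that `R` carries `≻'` to `≻` and `≺'` to `≺`, hence also their sum to `*`. The quadri-algebra
products `≻`, `≺`, `*` are exactly `≻'`, `≺'` and `≻' + ≺'`, so after pushing `R` through with
these identities every quadri-algebra axiom is a dendriform axiom evaluated at some `R`-images.
-/

open LinearMap

/-- Quadri-algebra axioms for the four products ↘ (`dse`), ↗ (`dne`), ↖ (`dnw`), ↙ (`dsw`). -/
def IsQuadri {K A : Type*} [Field K] [AddCommGroup A] [Module K A]
    (dse dne dnw dsw : A →ₗ[K] A →ₗ[K] A) : Prop :=
  (∀ x y z : A, dnw (dnw x y) z = dnw x (dse y z + dne y z + dnw y z + dsw y z)) ∧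
  (∀ x y z : A, dnw (dne x y) z = dne x (dnw y z + dsw y z)) ∧
  (∀ x y z : A, dne (dne x y + dnw x y) z = dne x (dne y z + dse y z)) ∧
  (∀ x y z : A, dnw (dsw x y) z = dsw x (dne y z + dnw y z)) ∧
  (∀ x y z : A, dnw (dse x y) z = dse x (dnw y z)) ∧
  (∀ x y z : A, dne (dse x y + dsw x y) z = dse x (dne y z)) ∧
  (∀ x y z : A, dsw (dnw x y + dsw x y) z = dsw x (dse y z + dsw y z)) ∧
  (∀ x y z : A, dsw (dne x y + dse x y) z = dse x (dsw y z)) ∧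
  (∀ x y z : A, dse (dse x y + dne x y + dnw x y + dsw x y) z = dse x (dse y z))

section RotaBaxter

variable {K A : Type*} [CommSemiring K] [AddCommMonoid A] [Module K A]

def IsRotaBaxter (μ : A →ₗ[K] A →ₗ[K] A) (R : A →ₗ[K] A) : Prop :=
  ∀ x y : A, μ (R x) (R y) = R (μ (R x) y + μ x (R y))

namespace IsRotaBaxter

variable {μ ν : A →ₗ[K] A →ₗ[K] A} {R : A →ₗ[K] A}

theorem map_swap (h : IsRotaBaxter μ R) (x y : A) :
    R (μ x (R y) + μ (R x) y) = μ (R x) (R y) := by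
  rw [add_comm, h]

theorem map_add_add_add (hμ : IsRotaBaxter μ R) (hν : IsRotaBaxter ν R) (x y : A) :
    R (μ (R x) y + μ x (R y) + ν x (R y) + ν (R x) y) = μ (R x) (R y) + ν (R x) (R y) := by
  rw [hμ, ← hν.map_swap, ← map_add, add_assoc _ (ν x (R y))]

end IsRotaBaxter

end RotaBaxter

theorem rotaBaxter_dendriform_gives_quadri_general
    {K A : Type*} [Field K] [AddCommGroup A] [Module K A]
    (succ prec : A →ₗ[K] A →ₗ[K] A)
    (hdend : IsDendriform succ prec)
    (R : A →ₗ[K] A)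
    (hRB1 : ∀ x y : A, succ (R x) (R y) = R (succ (R x) y + succ x (R y)))
    (hRB2 : ∀ x y : A, prec (R x) (R y) = R (prec (R x) y + prec x (R y))) :
    IsQuadri (succ ∘ₗ R) (succ.compl₂ R) (prec.compl₂ R) (prec ∘ₗ R) := by
  have hsucc : IsRotaBaxter succ R := hRB1
  have hprec : IsRotaBaxter prec R := hRB2
  obtain ⟨prec_prec, prec_succ, succ_succ⟩ := hdend
  refine ⟨?_, ?_, ?_, ?_, ?_, ?_, ?_, ?_, ?_⟩ <;> intro x y z <;>
    simp only [comp_apply, compl₂_apply]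
  · rw [prec_prec, hsucc.map_add_add_add hprec]
  · rw [prec_succ, hprec.map_swap]
  · rw [← succ_succ, hsucc.map_swap]
  · exact prec_prec _ _ _
  · exact prec_succ _ _ _
  · exact (succ_succ _ _ _).symm
  · rw [hprec.map_swap, prec_prec]
  · rw [hsucc.map_swap, prec_succ]
  · rw [hsucc.map_add_add_add hprec, succ_succ]

/-- Corollary 3.4.8: a Rota-Baxter operator `R` on a dendriform algebra `(A, ≻, ≺)`
induces a quadri-algebra structure on `A` by `x↘y = R(x)≻y`, `x↗y = x≻R(y)`,
`x↙y = R(x)≺y`, `x↖y = x≺R(y)`. -/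
theorem rotaBaxter_dendriform_gives_quadri
    {K A : Type*} [Field K] [CharZero K] [AddCommGroup A] [Module K A]
    (succ prec : A →ₗ[K] A →ₗ[K] A)
    (hdend : IsDendriform succ prec)
    (R : A →ₗ[K] A)
    (hRB1 : ∀ x y : A, succ (R x) (R y) = R (succ (R x) y + succ x (R y)))
    (hRB2 : ∀ x y : A, prec (R x) (R y) = R (prec (R x) y + prec x (R y))) :
    IsQuadri (succ ∘ₗ R) (succ.compl₂ R) (prec.compl₂ R) (prec ∘ₗ R) :=
  rotaBaxter_dendriform_gives_quadri_general succ prec hdend R hRB1 hRB2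
end

section
/- Let (A,≻,≺) be a finite-dimensional dendriform algebra with associated associative algebra (A,*), and let B be a nondegenerate symmetric 2-cocycle of (A,≻,≺). Then the four bilinear products ↘,↗,↖,↙ on A determined (via nondegeneracy of B) by B(x↘y,z) = B(y, z*x), B(x↗y,z) = −B(x, y≺z), B(x↖y,z) = B(x, y*z), B(x↙y,z) = −B(y, z≻x) for all x,y,z ∈ A make A a quadri-algebra whose associated horizontal dendriform algebra is (A,≻,≺), i.e. x≻y = x↗y + x↘y and x≺y = x↖y + x↙y for all x,y ∈ A. -/
/-!
Since `B` is nondegenerate, an identity `u = v` in `A` may be checked as `B u w = B v w` for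
all `w`. The defining relations of the four products move every product out of the first
argument of `B`: each quadri-algebra axiom then becomes one of the three dendriform axioms or
the associativity of `*`, while `x ≻ y = x ↗ y + x ↘ y` and `x ≺ y = x ↖ y + x ↙ y` become the
cocycle identity, read through the symmetry of `B`.
-/

open LinearMap

section

variable {K A : Type*} [Field K] [AddCommGroup A] [Module K A]
  {succ prec dse dne dnw dsw : A →ₗ[K] A →ₗ[K] A} {B : A →ₗ[K] A →ₗ[K] K}

theorem IsDendriform.mul_assoc (hd : IsDendriform succ prec) (x y z : A) :
    succ (succ x y + prec x y) z + prec (succ x y + prec x y) z =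
      succ x (succ y z + prec y z) + prec x (succ y z + prec y z) := by
  obtain ⟨hd1, hd2, hd3⟩ := hd
  rw [map_add prec, LinearMap.add_apply, ← hd3, hd2, hd1, map_add, map_add]
  abel

theorem succ_eq_dne_add_dse (hB : Function.Injective B) (hsymm : ∀ x y : A, B x y = B y x)
    (hcocycle : ∀ x y z : A, B (succ x y + prec x y) z = B y (prec z x) + B x (succ y z))
    (hne : ∀ x y z : A, B (dne x y) z = - B x (prec y z))
    (hse : ∀ x y z : A, B (dse x y) z = B y (succ z x + prec z x)) (x y : A) :
    succ x y = dne x y + dse x y := by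
  apply hB; ext w
  rw [map_add, LinearMap.add_apply, hne, hse, hsymm (succ x y), hsymm y, hcocycle]
  ring

theorem prec_eq_dnw_add_dsw (hB : Function.Injective B) (hsymm : ∀ x y : A, B x y = B y x)
    (hcocycle : ∀ x y z : A, B (succ x y + prec x y) z = B y (prec z x) + B x (succ y z))
    (hnw : ∀ x y z : A, B (dnw x y) z = B x (succ y z + prec y z))
    (hsw : ∀ x y z : A, B (dsw x y) z = - B y (succ z x)) (x y : A) :
    prec x y = dnw x y + dsw x y := by
  apply hB; ext w
  rw [map_add, LinearMap.add_apply, hnw, hsw, hsymm (prec x y), hsymm x, hcocycle]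
  ring

theorem IsDendriform.isQuadri_of_pairing (hd : IsDendriform succ prec)
    (hB : Function.Injective B)
    (hse : ∀ x y z : A, B (dse x y) z = B y (succ z x + prec z x))
    (hne : ∀ x y z : A, B (dne x y) z = - B x (prec y z))
    (hnw : ∀ x y z : A, B (dnw x y) z = B x (succ y z + prec y z))
    (hsw : ∀ x y z : A, B (dsw x y) z = - B y (succ z x))
    (hS : ∀ x y : A, succ x y = dne x y + dse x y)
    (hP : ∀ x y : A, prec x y = dnw x y + dsw x y) :
    IsQuadri dse dne dnw dsw := by
  have hM (x y : A) : dse x y + dne x y + dnw x y + dsw x y = succ x y + prec x y := by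
    rw [hS, hP]; abel
  obtain ⟨hd1, hd2, hd3⟩ := id hd
  refine ⟨fun x y z => ?_, fun x y z => ?_, fun x y z => ?_, fun x y z => ?_, fun x y z => ?_,
    fun x y z => ?_, fun x y z => ?_, fun x y z => ?_, fun x y z => ?_⟩ <;> apply hB <;> ext w
  · simp only [hM, hnw, hd.mul_assoc]
  · simp only [← hP, hnw, hne, hd1]
  · simp only [← hS, map_add, LinearMap.add_apply, hne, hnw, hd2]; ring
  · simp only [hnw, hne, hsw, hd3, map_add, LinearMap.add_apply]; ring
  · simp only [hnw, hse, hd.mul_assoc]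
  · simp only [map_add, LinearMap.add_apply, hne, hse, hsw, hd1]; ring
  · simp only [← hP, map_add, LinearMap.add_apply, hsw, hse, hd2]; ring
  · simp only [← hS, hsw, hse, hd3]
  · simp only [hM, hse, hd.mul_assoc]

end

theorem nondeg_symmetric_two_cocycle_gives_compatible_quadri_general
    {K A : Type*} [Field K] [AddCommGroup A] [Module K A]
    (succ prec : A →ₗ[K] A →ₗ[K] A)
    (hdend : IsDendriform succ prec)
    (B : A →ₗ[K] A →ₗ[K] K)
    (hsymm : ∀ x y : A, B x y = B y x)
    (hnd : ∀ x : A, (∀ y : A, B x y = 0) → x = 0)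
    (hcocycle : ∀ x y z : A,
      B (succ x y + prec x y) z = B y (prec z x) + B x (succ y z))
    (dse dne dnw dsw : A →ₗ[K] A →ₗ[K] A)
    (hse : ∀ x y z : A, B (dse x y) z = B y (succ z x + prec z x))
    (hne : ∀ x y z : A, B (dne x y) z = - B x (prec y z))
    (hnw : ∀ x y z : A, B (dnw x y) z = B x (succ y z + prec y z))
    (hsw : ∀ x y z : A, B (dsw x y) z = - B y (succ z x)) :
    IsQuadri dse dne dnw dsw ∧
    (∀ x y : A, succ x y = dne x y + dse x y) ∧
    (∀ x y : A, prec x y = dnw x y + dsw x y) := by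
  have hB : Function.Injective B :=
    LinearMap.ker_eq_bot.mp (separatingLeft_iff_ker_eq_bot.mp hnd)
  have hS := succ_eq_dne_add_dse hB hsymm hcocycle hne hse
  have hP := prec_eq_dnw_add_dsw hB hsymm hcocycle hnw hsw
  exact ⟨hdend.isQuadri_of_pairing hB hse hne hnw hsw hS hP, hS, hP⟩

/-- Proposition 3.4.11: if `B` is a nondegenerate symmetric 2-cocycle of a
finite-dimensional dendriform algebra `(A, ≻, ≺)` with associated associative algebra
`(A, *)`, then the four products determined by `B(x↘y, z) = B(y, z*x)`,
`B(x↗y, z) = −B(x, y≺z)`, `B(x↖y, z) = B(x, y*z)`, `B(x↙y, z) = −B(y, z≻x)` make `A` a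
quadri-algebra whose associated horizontal dendriform algebra is `(A, ≻, ≺)`. -/
theorem nondeg_symmetric_two_cocycle_gives_compatible_quadri
    {K A : Type*} [Field K] [CharZero K] [AddCommGroup A] [Module K A]
    [FiniteDimensional K A]
    (succ prec : A →ₗ[K] A →ₗ[K] A)
    (hdend : IsDendriform succ prec)
    (B : A →ₗ[K] A →ₗ[K] K)
    (hsymm : ∀ x y : A, B x y = B y x)
    (hnd : ∀ x : A, (∀ y : A, B x y = 0) → x = 0)
    (hcocycle : ∀ x y z : A,
      B (succ x y + prec x y) z = B y (prec z x) + B x (succ y z))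
    (dse dne dnw dsw : A →ₗ[K] A →ₗ[K] A)
    (hse : ∀ x y z : A, B (dse x y) z = B y (succ z x + prec z x))
    (hne : ∀ x y z : A, B (dne x y) z = - B x (prec y z))
    (hnw : ∀ x y z : A, B (dnw x y) z = B x (succ y z + prec y z))
    (hsw : ∀ x y z : A, B (dsw x y) z = - B y (succ z x)) :
    IsQuadri dse dne dnw dsw ∧
    (∀ x y : A, succ x y = dne x y + dse x y) ∧
    (∀ x y : A, prec x y = dnw x y + dsw x y) :=
  nondeg_symmetric_two_cocycle_gives_compatible_quadri_general succ prec hdend B hsymm hnd hcocycle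
    dse dne dnw dsw hse hne hnw hsw
end
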